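/- arXiv:math/0212336 — 10 statements merged into one kernel-verified Lean document; each statement's English description precedes it below -/
import Mathlib

section
/- If X = {f_α : α < β} ⊆ ω^ω is well-ordered by eventual dominance and unbounded in (ω^ω, ≤*), then X is a λ-set, i.e., every countable subset of X is a relative G_δ in X. -/
set_option maxHeartbeats 1000000


open Filter Set

lemma isGdelta_compl_ev (p : ℕ → ℕ → Prop) :
    IsGδ {y : ℕ → ℕ | ∀ᶠ n in atTop, p n (y n)}ᶜ := by
  have h : {y : ℕ → ℕ | ∀ᶠ n in atTop, p n (y n)} =
      ⋃ m, {y : ℕ → ℕ | ∀ n, m ≤ n → p n (y n)} := by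
    ext y; simp [eventually_atTop]
  rw [h, compl_iUnion]
  refine IsGδ.iInter fun m => IsOpen.isGδ ?_
  rw [isOpen_compl_iff]
  have h2 : {y : ℕ → ℕ | ∀ n, m ≤ n → p n (y n)} =
      ⋂ n, ⋂ (_ : m ≤ n), ((fun y : ℕ → ℕ => y n) ⁻¹' {x | p n x}) := by
    ext y; simp
  rw [h2]
  exact isClosed_iInter fun n => isClosed_iInter fun _ =>
    (isClosed_discrete _).preimage (continuous_apply n)

theorem unbounded_wellordered_scale_is_lambda_set
    {ι : Type*} [LinearOrder ι] [WellFoundedLT ι]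
    (f : ι → (ℕ → ℕ))
    (hmono : ∀ a b : ι, a < b → ∀ᶠ n in atTop, f a n < f b n)
    (hunb : ¬ ∃ g : ℕ → ℕ, ∀ a : ι, ∀ᶠ n in atTop, f a n ≤ g n) :
    ∀ A ⊆ Set.range f, A.Countable →
      ∃ G : Set (ℕ → ℕ), IsGδ G ∧ Set.range f ∩ G = A := by
  classical
  intro A hAsub hAc
  have hle : ∀ {a b : ι}, a ≤ b → ∀ᶠ n in atTop, f a n ≤ f b n := by
    intro a b hab
    rcases hab.lt_or_eq with h | h
    · exact (hmono a b h).mono fun n hn => hn.le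
    · subst h; exact Eventually.of_forall fun n => le_rfl
  have hlt_not : ∀ {a b : ι}, a < b → ¬ ∀ᶠ n in atTop, f b n ≤ f a n := by
    intro a b hab hcon
    obtain ⟨n, h1, h2⟩ := ((hmono a b hab).and hcon).exists
    exact absurd (h1.trans_le h2) (lt_irrefl _)
  set S : Set ι := f ⁻¹' A with hSdef
  have hS : S.Countable := by
    have hinj : Function.Injective f := by
      intro a b hab
      rcases lt_trichotomy a b with h | h | h
      · obtain ⟨n, hn⟩ := (hmono a b h).exists
        rw [hab] at hn; exact absurd hn (lt_irrefl _)
      · exact h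
      · obtain ⟨n, hn⟩ := (hmono b a h).exists
        rw [hab] at hn; exact absurd hn (lt_irrefl _)
    exact hAc.preimage hinj
  -- g dominating A
  obtain ⟨g, hg⟩ : ∃ g : ℕ → ℕ, ∀ x ∈ A, ∀ᶠ n in atTop, x n < g n := by
    rcases A.eq_empty_or_nonempty with rfl | hne
    · exact ⟨0, by simp⟩
    · obtain ⟨e, he⟩ := hAc.exists_eq_range hne
      refine ⟨fun n => (Finset.range (n + 1)).sup (fun k => e k n) + 1, ?_⟩
      intro x hx
      rw [he] at hx
      obtain ⟨k, rfl⟩ := hx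
      filter_upwards [eventually_ge_atTop k] with n hn
      have hle' : e k n ≤ (Finset.range (n + 1)).sup (fun j => e j n) :=
        Finset.le_sup (f := fun j => e j n)
          (Finset.mem_range.mpr (lt_of_le_of_lt hn (Nat.lt_succ_self n)))
      omega
  obtain ⟨β, hβ⟩ : ∃ β : ι, ¬ ∀ᶠ n in atTop, f β n ≤ g n := by
    by_contra hc
    simp only [not_exists, not_not] at hc
    exact hunb ⟨g, hc⟩
  have hSβ : ∀ t ∈ S, t < β := by
    intro t ht
    by_contra hc
    push_neg at hc
    have h1 : ∀ᶠ n in atTop, f β n ≤ f t n := hle hc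
    have h2 : ∀ᶠ n in atTop, f t n < g n := hg (f t) ht
    exact hβ ((h1.and h2).mono fun n hn => hn.1.trans hn.2.le)
  -- main claim by well-founded induction
  have claim : ∀ s : ι, ∃ G : Set (ℕ → ℕ), IsGδ G ∧ A ⊆ G ∧
      ∀ γ : ι, γ < s → γ ∉ S → f γ ∉ G := by
    intro s
    induction s using WellFoundedLT.induction with
    | _ s IH =>
    choose! G hG1 hG2 hG3 using IH
    set Gtail : Set (ℕ → ℕ) := ⋂ σ ∈ S ∩ Iio s, G σ with hGtaildef
    have htailGδ : IsGδ Gtail :=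
      IsGδ.biInter (hS.mono inter_subset_left) fun σ hσ => hG1 σ hσ.2
    have htailA : A ⊆ Gtail := by
      intro x hx
      exact mem_iInter₂.mpr fun σ hσ => hG2 σ hσ.2 hx
    have htailEx : ∀ γ, γ ∉ S → (∃ σ ∈ S, σ < s ∧ γ < σ) → f γ ∉ Gtail := by
      rintro γ hγ ⟨σ, hσS, hσs, hγσ⟩ hmem
      exact hG3 σ hσs γ hγσ hγ (mem_iInter₂.mp hmem σ ⟨hσS, hσs⟩)
    by_cases hW : ∃ w : ι, w < s ∧ w ∉ S ∧ ∀ σ ∈ S, σ < s → σ < w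
    · obtain ⟨w, hwmem, hwmin⟩ :=
        (wellFounded_lt (α := ι)).has_min
          {w : ι | w < s ∧ w ∉ S ∧ ∀ σ ∈ S, σ < s → σ < w} hW
      obtain ⟨hws, hwS, hwub⟩ := hwmem
      refine ⟨({y : ℕ → ℕ | ∀ᶠ n in atTop, f w n ≤ y n}ᶜ ∪
          {y : ℕ → ℕ | ∀ᶠ n in atTop, y n < f s n}ᶜ) ∩ Gtail,
        ((isGdelta_compl_ev (fun n x => f w n ≤ x)).union
          (isGdelta_compl_ev (fun n x => x < f s n))).inter htailGδ, ?_, ?_⟩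
      · intro x hx
        refine mem_inter ?_ (htailA hx)
        obtain ⟨t, rfl⟩ := hAsub hx
        have htS : t ∈ S := hx
        simp only [mem_union, mem_compl_iff, mem_setOf_eq]
        rcases lt_or_ge t s with hts | hst
        · exact Or.inl (hlt_not (hwub t htS hts))
        · refine Or.inr ?_
          intro hcon
          have h1 := hle hst
          obtain ⟨n, a, b⟩ := (h1.and hcon).exists
          exact absurd (a.trans_lt b) (lt_irrefl _)
      · intro γ hγs hγS
        by_cases hγW : ∀ σ ∈ S, σ < s → σ < γ
        · have hwγ : w ≤ γ := by
            by_contra hc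
            push_neg at hc
            exact hwmin γ ⟨hγs, hγS, hγW⟩ hc
          intro hmem
          simp only [mem_inter_iff, mem_union, mem_compl_iff, mem_setOf_eq] at hmem
          rcases hmem.1 with h | h
          · exact h (hle hwγ)
          · exact h (hmono γ s hγs)
        · push_neg at hγW
          obtain ⟨σ, hσS, hσs, hγσ⟩ := hγW
          have hlt : γ < σ := lt_of_le_of_ne hγσ (fun h => hγS (h ▸ hσS))
          exact fun hmem => htailEx γ hγS ⟨σ, hσS, hσs, hlt⟩ hmem.2
    · refine ⟨Gtail, htailGδ, htailA, ?_⟩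
      intro γ hγs hγS
      apply htailEx γ hγS
      by_contra hc
      push_neg at hc
      exact hW ⟨γ, hγs, hγS, fun σ hσ hσs =>
        lt_of_le_of_ne (hc σ hσ hσs) (fun h => hγS (h ▸ hσ))⟩
  obtain ⟨Gβ, hGβ1, hGβ2, hGβ3⟩ := claim β
  refine ⟨{y : ℕ → ℕ | ∀ᶠ n in atTop, f β n ≤ y n}ᶜ ∩ Gβ,
    (isGdelta_compl_ev (fun n x => f β n ≤ x)).inter hGβ1, ?_⟩
  ext x
  constructor
  · rintro ⟨⟨γ, rfl⟩, hx1, hx2⟩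
    simp only [mem_compl_iff, mem_setOf_eq] at hx1
    by_contra hA
    have hγS : γ ∉ S := hA
    rcases lt_or_ge γ β with h | h
    · exact hGβ3 γ h hγS hx2
    · exact hx1 (hle h)
  · intro hx
    refine ⟨hAsub hx, ?_, hGβ2 hx⟩
    simp only [mem_compl_iff, mem_setOf_eq]
    obtain ⟨t, rfl⟩ := hAsub hx
    exact hlt_not (hSβ t hx)
end

section
/- Suppose X, Y ⊆ 2^ω with |X| = |Y|, X is a λ'-set, and Y is not a γ-set. Then there exists Z ⊆ 2^ω × 2^ω (equivalently, Z ⊆ 2^ω after identifying 2^ω × 2^ω with 2^ω via a homeomorphism) which is a λ'-set and not a γ-set; namely, enumerating X = {x_α : α < κ}, Y = {y_α : α < κ}, the set Z = {(x_α, y_α) : α < κ} works. -/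
open Filter Set

def IsLambdaPrime {α : Type*} [TopologicalSpace α] (X : Set α) : Prop :=
  ∀ A : Set α, A.Countable → ∃ G : Set α, IsGδ G ∧ (X ∪ A) ∩ G = A

def IsOmegaCover {α : Type*} [TopologicalSpace α] (X : Set α) (U : Set (Set α)) : Prop :=
  U.Countable ∧ (∀ u ∈ U, IsOpen u) ∧ ∀ F : Set α, F ⊆ X → F.Finite → ∃ u ∈ U, F ⊆ u

def IsGammaCover {α : Type*} [TopologicalSpace α] (X : Set α) (V : ℕ → Set α) : Prop :=
  (∀ n, IsOpen (V n)) ∧ ∀ x ∈ X, ∀ᶠ n in atTop, x ∈ V n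

def IsGammaSet {α : Type*} [TopologicalSpace α] (X : Set α) : Prop :=
  ∀ U : Set (Set α), IsOmegaCover X U →
    ∃ V : ℕ → Set α, (∀ n, V n ∈ U) ∧ IsGammaCover X V


lemma isGδ_preimage_cont {α β : Type*} [TopologicalSpace α] [TopologicalSpace β]
    {f : α → β} (hf : Continuous f) {G : Set β} (hG : IsGδ G) : IsGδ (f ⁻¹' G) := by
  obtain ⟨T, hTopen, hTcount, rfl⟩ := hG
  rw [Set.preimage_sInter]
  exact IsGδ.biInter hTcount fun t ht => ((hTopen t ht).preimage hf).isGδ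

theorem lambda_prime_and_not_gamma_from_pair
    (X Y : Set (ℕ → Bool))
    (hcard : Cardinal.mk X = Cardinal.mk Y)
    (hX : IsLambdaPrime X) (hY : ¬ IsGammaSet Y) :
    ∃ Z : Set ((ℕ → Bool) × (ℕ → Bool)),
      (∃ e : X ≃ Y, Z = {p | ∃ x : X, p = ((x : ℕ → Bool), (e x : ℕ → Bool))}) ∧
      IsLambdaPrime Z ∧ ¬ IsGammaSet Z := by
  obtain ⟨e⟩ := Cardinal.eq.mp hcard
  set Z : Set ((ℕ → Bool) × (ℕ → Bool)) :=
    {p | ∃ x : X, p = ((x : ℕ → Bool), (e x : ℕ → Bool))} with hZdef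
  refine ⟨Z, ⟨e, rfl⟩, ?_, ?_⟩
  · -- λ'
    intro A hA
    set A₁ : Set (ℕ → Bool) := Prod.fst '' A with hA₁
    obtain ⟨G, hG, hGeq⟩ := hX A₁ (hA.image _)
    have hA₁G : A₁ ⊆ G := by
      intro a ha
      have : a ∈ (X ∪ A₁) ∩ G := by rw [hGeq]; exact ha
      exact this.2
    set C : Set ((ℕ → Bool) × (ℕ → Bool)) := Z ∩ Prod.fst ⁻¹' A₁ with hC
    have hCcount : C.Countable := by
      have hmaps : MapsTo Prod.fst C A₁ := fun p hp => hp.2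
      have hinj : InjOn Prod.fst C := by
        intro p hp q hq hpq
        obtain ⟨x, hx⟩ := hp.1
        obtain ⟨y, hy⟩ := hq.1
        subst hx; subst hy
        simp only [Prod.mk.injEq] at hpq ⊢
        have : x = y := Subtype.ext hpq
        subst this; exact ⟨rfl, rfl⟩
      exact hmaps.countable_of_injOn hinj (hA.image _)
    set G₂ : Set ((ℕ → Bool) × (ℕ → Bool)) :=
      (Prod.fst ⁻¹' G) ∩ ⋂ c ∈ C \ A, {c}ᶜ with hG₂
    refine ⟨G₂, ?_, ?_⟩
    · exact (isGδ_preimage_cont continuous_fst hG).inter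
        (IsGδ.biInter (hCcount.mono diff_subset)
          (fun c _ => (isOpen_compl_singleton).isGδ))
    · ext p
      simp only [mem_inter_iff, mem_union]
      constructor
      · rintro ⟨hpZA, hpG, hpC⟩
        rcases hpZA with hpZ | hpA
        · -- p ∈ Z ∩ fst⁻¹' G, so p.1 ∈ X ∩ G ⊆ A₁, so p ∈ C
          obtain ⟨x, hx⟩ := hpZ
          have hx1 : p.1 ∈ X := by rw [hx]; exact x.2
          have hpA₁ : p.1 ∈ A₁ := by
            have : p.1 ∈ (X ∪ A₁) ∩ G := ⟨Or.inl hx1, hpG⟩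
            rw [hGeq] at this; exact this
          have hpCm : p ∈ C := ⟨⟨x, hx⟩, hpA₁⟩
          by_contra hpnA
          have := mem_iInter₂.mp hpC
          exact this p ⟨hpCm, hpnA⟩ rfl
        · exact hpA
      · intro hpA
        refine ⟨Or.inr hpA, hA₁G ⟨p, hpA, rfl⟩, ?_⟩
        exact mem_biInter fun c hc => fun h => hc.2 (h ▸ hpA)
  · -- not γ
    intro hZ
    apply hY
    intro U hU
    set U' : Set (Set ((ℕ → Bool) × (ℕ → Bool))) := (fun u => Prod.snd ⁻¹' u) '' U with hU'
    have hU'cover : IsOmegaCover Z U' := by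
      refine ⟨hU.1.image _, ?_, ?_⟩
      · rintro _ ⟨u, hu, rfl⟩
        exact (hU.2.1 u hu).preimage continuous_snd
      · intro F hF hFfin
        have hF2 : Prod.snd '' F ⊆ Y := by
          rintro _ ⟨p, hp, rfl⟩
          obtain ⟨x, hx⟩ := hF hp
          rw [hx]; exact (e x).2
        obtain ⟨u, hu, hsub⟩ := hU.2.2 _ hF2 (hFfin.image _)
        exact ⟨_, ⟨u, hu, rfl⟩, fun p hp => hsub ⟨p, hp, rfl⟩⟩
    obtain ⟨V', hV'mem, hV'open, hV'gamma⟩ := hZ U' hU'cover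
    choose W hWU hWeq using fun n => hV'mem n
    refine ⟨W, hWU, fun n => hU.2.1 _ (hWU n), ?_⟩
    intro y hy
    obtain ⟨x, hx⟩ := e.surjective ⟨y, hy⟩
    have hzZ : ((x : ℕ → Bool), y) ∈ Z := by
      refine ⟨x, ?_⟩
      rw [hx]
    have := hV'gamma _ hzZ
    filter_upwards [this] with n hn
    rw [← hWeq n] at hn
    exact hn
end

section
/- If X ⊆ 2^ω is not a γ-set, then player C (choosing clopen sets) has a winning strategy in the game G^γ_{F,C}(X). -/
open Filter Set

/-- The responses of player C using strategy `σ` against the sequence `F` of moves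
of player F: C's `n`-th move depends on F's moves `F 0, …, F n`. -/
def playC (σ : List (Set (ℕ → Bool)) → Set (ℕ → Bool)) (F : ℕ → Set (ℕ → Bool))
    (n : ℕ) : Set (ℕ → Bool) :=
  σ ((List.range (n + 1)).map F)

/-- `σ` is a winning strategy for player C in the game `G^γ_{F,C}(X)`: against any
sequence of legal moves of F (finite subsets of `X`), C's responses are legal
(clopen sets containing the current move of F) and do not form a γ-cover of `X`. -/
def WinningForC (X : Set (ℕ → Bool)) (σ : List (Set (ℕ → Bool)) → Set (ℕ → Bool)) : Prop :=
  ∀ F : ℕ → Set (ℕ → Bool), (∀ n, (F n).Finite ∧ F n ⊆ X) →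
    (∀ n, IsClopen (playC σ F n) ∧ F n ⊆ playC σ F n) ∧
    ¬ IsGammaCover X (playC σ F)

lemma finite_clopen_sep (S u : Set (ℕ → Bool)) (hS : S.Finite) (hu : IsOpen u) (hSu : S ⊆ u) :
    ∃ c : Set (ℕ → Bool), IsClopen c ∧ S ⊆ c ∧ c ⊆ u := by
  have : ∀ x : S, ∃ V : Set (ℕ → Bool), IsClopen V ∧ (x : ℕ → Bool) ∈ V ∧ V ⊆ u :=
    fun x => compact_exists_isClopen_in_isOpen hu (hSu x.2)
  choose V hV hxV hVu using this
  haveI := hS.fintype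
  refine ⟨⋃ x : S, V x, isClopen_iUnion_of_finite hV, ?_, iUnion_subset hVu⟩
  exact fun x hx => mem_iUnion.2 ⟨⟨x, hx⟩, hxV ⟨x, hx⟩⟩

theorem not_gamma_set_implies_C_wins
    (X : Set (ℕ → Bool)) (hX : ¬ IsGammaSet X) :
    ∃ σ : List (Set (ℕ → Bool)) → Set (ℕ → Bool), WinningForC X σ := by
  rw [IsGammaSet] at hX
  push_neg at hX
  obtain ⟨U, hU, hnoV⟩ := hX
  have key : ∀ S : Set (ℕ → Bool), ∃ c : Set (ℕ → Bool),
      IsClopen c ∧ S ⊆ c ∧ ((S.Finite ∧ S ⊆ X) → ∃ u ∈ U, c ⊆ u) := by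
    intro S
    by_cases h : S.Finite ∧ S ⊆ X
    · obtain ⟨u, huU, hSu⟩ := hU.2.2 S h.2 h.1
      obtain ⟨c, hc, hSc, hcu⟩ := finite_clopen_sep S u h.1 (hU.2.1 u huU) hSu
      exact ⟨c, hc, hSc, fun _ => ⟨u, huU, hcu⟩⟩
    · exact ⟨univ, isClopen_univ, subset_univ _, fun h' => absurd h' h⟩
  choose c hc1 hc2 hc3 using key
  refine ⟨fun L => c (L.getLastD ∅), ?_⟩
  intro F hF
  have hplay : ∀ n, playC (fun L => c (L.getLastD ∅)) F n = c (F n) := by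
    intro n
    simp [playC, List.range_succ]
  constructor
  · intro n
    rw [hplay n]
    exact ⟨hc1 _, hc2 _⟩
  · intro hγ
    have hu : ∀ n, ∃ u ∈ U, c (F n) ⊆ u := fun n => hc3 _ (hF n)
    choose u huU hcu using hu
    refine hnoV u huU ⟨fun n => hU.2.1 _ (huU n), fun x hx => ?_⟩
    filter_upwards [hγ.2 x hx] with n hn
    exact hcu n (by rwa [hplay n] at hn)
end

section
/- Suppose X ⊆ 2^ω satisfies S_1(Ω,Γ): for any sequence ⟨U_n : n < ω⟩ of ω-covers of X one can choose C_n ∈ U_n so that ⟨C_n⟩ is a γ-cover of X. Then player C has no winning strategy in the game G^γ_{F,C}(X). -/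
open Filter Set

/-- The selection principle `S₁(Ω,Γ)`. -/
def S1OmegaGamma (X : Set (ℕ → Bool)) : Prop :=
  ∀ U : ℕ → Set (Set (ℕ → Bool)), (∀ n, IsOmegaCover X (U n)) →
    ∃ V : ℕ → Set (ℕ → Bool), (∀ n, V n ∈ U n) ∧ IsGammaCover X V

/-! If `σ` were winning for `C`, then at every legal position its answers would form an ω-cover
of `X`, and a countable one because there are only countably many clopen subsets of `2^ω`; so `F`
can fix countably many moves realising all of them. This gives a countably branching tree of
positions. Applying `S₁(Ω,Γ)` to the covers at all nodes at once selects one answer per node, and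
following the selected answers from the root produces a play of `F` against `σ` whose answers are
the selections along an injective sequence of nodes, hence a γ-cover: `F` wins that play. -/

open Function TopologicalSpace

lemma isOmegaCover_singleton_univ {α : Type*} [TopologicalSpace α] (X : Set α) :
    IsOmegaCover X {univ} :=
  ⟨countable_singleton _, fun _ hu => hu ▸ isOpen_univ, fun _ _ _ => ⟨univ, rfl, subset_univ _⟩⟩

lemma IsGammaCover.comp_tendsto {α : Type*} [TopologicalSpace α] {X : Set α} {V : ℕ → Set α}
    (hV : IsGammaCover X V) {t : ℕ → ℕ} (ht : Tendsto t atTop atTop) :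
    IsGammaCover X (V ∘ t) :=
  ⟨fun n => hV.1 (t n), fun x hx => ht.eventually (hV.2 x hx)⟩

lemma countable_setOf_isClopen : {s : Set (ℕ → Bool) | IsClopen s}.Countable := by
  have : Countable (Clopens (ℕ → Bool)) :=
    Clopens.countable_iff_secondCountable.mpr inferInstance
  convert countable_range ((↑) : Clopens (ℕ → Bool) → Set (ℕ → Bool))
  exact Set.ext fun s => ⟨fun hs => ⟨⟨s, hs⟩, rfl⟩, fun ⟨c, hc⟩ => hc ▸ c.2⟩

lemma S1OmegaGamma.exists_selection {X : Set (ℕ → Bool)} (hX : S1OmegaGamma X)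
    {ι : Type*} [Countable ι] (U : ι → Set (Set (ℕ → Bool))) (hU : ∀ i, IsOmegaCover X (U i)) :
    ∃ V : ι → Set (ℕ → Bool), (∀ i, V i ∈ U i) ∧
      ∀ t : ℕ → ι, Injective t → IsGammaCover X (V ∘ t) := by
  obtain ⟨e, he⟩ := exists_injective_nat ι
  have hcover : ∀ n, IsOmegaCover X (extend e U (fun _ => {univ}) n) := by
    intro n
    by_cases hn : ∃ i, e i = n
    · obtain ⟨i, rfl⟩ := hn
      rw [he.extend_apply]
      exact hU i
    · rw [extend_apply' _ _ _ hn]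
      exact isOmegaCover_singleton_univ X
  obtain ⟨V, hVmem, hVγ⟩ := hX _ hcover
  refine ⟨V ∘ e, fun i => ?_, fun t ht => hVγ.comp_tendsto (he.comp ht).nat_tendsto_atTop⟩
  simpa only [comp_apply, he.extend_apply] using hVmem (e i)

def IsLegal (X : Set (ℕ → Bool)) (p : List (Set (ℕ → Bool))) : Prop :=
  ∀ s ∈ p, s.Finite ∧ s ⊆ X

lemma isLegal_append_singleton {X : Set (ℕ → Bool)} {p : List (Set (ℕ → Bool))}
    (hp : IsLegal X p) {G : Set (ℕ → Bool)} (hG : G.Finite ∧ G ⊆ X) : IsLegal X (p ++ [G]) := by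
  intro s hs
  rcases List.mem_append.1 hs with hs | hs
  · exact hp s hs
  · exact List.mem_singleton.1 hs ▸ hG

lemma playC_eq_append (σ : List (Set (ℕ → Bool)) → Set (ℕ → Bool)) (F : ℕ → Set (ℕ → Bool))
    (n : ℕ) : playC σ F n = σ ((List.range n).map F ++ [F n]) := by
  rw [playC, List.range_succ, List.map_append, List.map_singleton]

namespace WinningForC

variable {X : Set (ℕ → Bool)} {σ : List (Set (ℕ → Bool)) → Set (ℕ → Bool)}

lemma isClopen_and_subset (hσ : WinningForC X σ) {p : List (Set (ℕ → Bool))} (hp : IsLegal X p)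
    {G : Set (ℕ → Bool)} (hG : G.Finite ∧ G ⊆ X) :
    IsClopen (σ (p ++ [G])) ∧ G ⊆ σ (p ++ [G]) := by
  -- `σ` is only constrained along full plays, so pad the position with empty moves.
  set L := p ++ [G]
  set F : ℕ → Set (ℕ → Bool) := fun n => L.getD n ∅
  have hF : ∀ n, (F n).Finite ∧ F n ⊆ X := by
    intro n
    by_cases hn : n < L.length
    · simpa only [F, List.getD_eq_getElem _ _ hn] using
        isLegal_append_singleton hp hG _ (List.getElem_mem hn)
    · simp only [F, List.getD_eq_default _ _ (not_lt.1 hn)]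
      exact ⟨finite_empty, empty_subset X⟩
  have hpos : (List.range p.length).map F = p := by
    refine List.ext_getElem (by simp) fun i _ hi => ?_
    simp [F, L, List.getElem?_append_left hi, List.getElem?_eq_getElem hi]
  have hlast : F p.length = G := by simp [F, L]
  simpa only [playC_eq_append, hpos, hlast] using (hσ F hF).1 p.length

lemma exists_moves_of_isLegal (hσ : WinningForC X σ) {p : List (Set (ℕ → Bool))}
    (hp : IsLegal X p) :
    ∃ m : ℕ → Set (ℕ → Bool), (∀ k, (m k).Finite ∧ m k ⊆ X) ∧
      IsOmegaCover X (range fun k => σ (p ++ [m k])) := by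
  set legal := {G : Set (ℕ → Bool) | G.Finite ∧ G ⊆ X}
  have hcount : ((fun G => σ (p ++ [G])) '' legal).Countable :=
    countable_setOf_isClopen.mono <| by
      rintro _ ⟨G, hG, rfl⟩
      exact (hσ.isClopen_and_subset hp hG).1
  obtain ⟨c, hc⟩ := hcount.exists_eq_range
    ⟨_, mem_image_of_mem _ (⟨finite_empty, empty_subset X⟩ : ∅ ∈ legal)⟩
  have : ∀ k, ∃ G ∈ legal, σ (p ++ [G]) = c k := fun k => by
    rw [← mem_image, hc]
    exact mem_range_self k
  choose m hm hmc using this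
  refine ⟨m, hm, countable_range _, ?_, ?_⟩
  · rintro _ ⟨k, rfl⟩
    exact (hσ.isClopen_and_subset hp (hm k)).1.isOpen
  · intro G hGX hG
    obtain ⟨k, hk⟩ : σ (p ++ [G]) ∈ range c := hc ▸ mem_image_of_mem _ ⟨hG, hGX⟩
    exact ⟨_, mem_range_self k, (hmc k).trans hk ▸ (hσ.isClopen_and_subset hp ⟨hG, hGX⟩).2⟩

lemma exists_moves (hσ : WinningForC X σ) :
    ∃ next : List (Set (ℕ → Bool)) → ℕ → Set (ℕ → Bool),
      (∀ p k, (next p k).Finite ∧ next p k ⊆ X) ∧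
      ∀ p, IsLegal X p → IsOmegaCover X (range fun k => σ (p ++ [next p k])) := by
  have : ∀ p, ∃ m : ℕ → Set (ℕ → Bool), (∀ k, (m k).Finite ∧ m k ⊆ X) ∧
      (IsLegal X p → IsOmegaCover X (range fun k => σ (p ++ [m k]))) := by
    intro p
    by_cases hp : IsLegal X p
    · obtain ⟨m, hm, hcover⟩ := hσ.exists_moves_of_isLegal hp
      exact ⟨m, hm, fun _ => hcover⟩
    · exact ⟨fun _ => ∅, fun _ => ⟨finite_empty, empty_subset X⟩, fun h => absurd h hp⟩
  choose next hnext using this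
  exact ⟨next, fun p => (hnext p).1, fun p => (hnext p).2⟩

end WinningForC

section Tree

variable {β : Type*}

/-- The position reached when, starting from the empty play, the `k`-th move offered by `next`
is played for each `k` of `s`, read from right to left. -/
def treePos (next : List β → ℕ → β) (s : List ℕ) : List β :=
  s.foldr (fun k p => p ++ [next p k]) []

def treeBranch (g : List ℕ → ℕ) (n : ℕ) : List ℕ :=
  (fun s => g s :: s)^[n] []

lemma treeBranch_succ (g : List ℕ → ℕ) (n : ℕ) :
    treeBranch g (n + 1) = g (treeBranch g n) :: treeBranch g n :=
  iterate_succ_apply' _ _ _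

lemma length_treeBranch (g : List ℕ → ℕ) (n : ℕ) : (treeBranch g n).length = n := by
  induction n with
  | zero => rfl
  | succ n ih => rw [treeBranch_succ, List.length_cons, ih]

lemma treeBranch_injective (g : List ℕ → ℕ) : Injective (treeBranch g) := fun a b hab => by
  simpa only [length_treeBranch] using congrArg List.length hab

lemma forall_mem_treePos {next : List β → ℕ → β} {P : β → Prop} (hP : ∀ p k, P (next p k))
    (s : List ℕ) : ∀ b ∈ treePos next s, P b := by
  induction s with
  | nil => simp [treePos]
  | cons k s ih =>
    intro b hb
    rcases List.mem_append.1 hb with hb | hb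
    · exact ih b hb
    · exact List.mem_singleton.1 hb ▸ hP _ _

lemma map_range_treePos_treeBranch (next : List β → ℕ → β) (g : List ℕ → ℕ) (n : ℕ) :
    (List.range n).map (fun m => next (treePos next (treeBranch g m)) (g (treeBranch g m))) =
      treePos next (treeBranch g n) := by
  induction n with
  | zero => rfl
  | succ n ih => rw [List.range_succ, List.map_append, ih, treeBranch_succ]; rfl

end Tree

theorem S1_implies_C_has_no_winning_strategy
    (X : Set (ℕ → Bool)) (hX : S1OmegaGamma X) :
    ¬ ∃ σ : List (Set (ℕ → Bool)) → Set (ℕ → Bool), WinningForC X σ := by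
  rintro ⟨σ, hσ⟩
  obtain ⟨next, hnext, hcover⟩ := hσ.exists_moves
  have hlegal : ∀ s, IsLegal X (treePos next s) := forall_mem_treePos hnext
  obtain ⟨V, hVmem, hVγ⟩ := hX.exists_selection
    (fun s => range fun k => σ (treePos next s ++ [next (treePos next s) k]))
    (fun s => hcover _ (hlegal s))
  choose g hg using hVmem
  set F := fun m => next (treePos next (treeBranch g m)) (g (treeBranch g m))
  have hplay : playC σ F = V ∘ treeBranch g := funext fun n => by
    rw [playC_eq_append, map_range_treePos_treeBranch, comp_apply, ← hg]
  exact (hσ F fun n => hnext _ _).2 (hplay ▸ hVγ _ (treeBranch_injective g))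
end

section
/- For X ⊆ 2^ω: X is a γ-set if and only if player C has no winning strategy in the game G^γ_{F,C}(X). (Using the Gerlits–Nagy fact that γ-sets satisfy S_1(Ω,Γ).) -/
open Filter Set

lemma cyl_clopen (f : ℕ → Bool) (I : Set ℕ) (hI : I.Finite) :
    IsClopen {g : ℕ → Bool | ∀ i ∈ I, g i = f i} := by
  have : {g : ℕ → Bool | ∀ i ∈ I, g i = f i} = I.pi (fun i => {f i}) := by
    ext g; simp [Set.mem_pi]
  rw [this]
  exact ⟨isClosed_set_pi (fun i _ => isClosed_discrete _),
    isOpen_set_pi hI (fun i _ => isOpen_discrete _)⟩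

lemma exists_clopen_between {u : Set (ℕ → Bool)} (hu : IsOpen u) {x : ℕ → Bool} (hx : x ∈ u) :
    ∃ C, IsClopen C ∧ x ∈ C ∧ C ⊆ u := by
  obtain ⟨I, v, hv, hsub⟩ := isOpen_pi_iff.1 hu x hx
  refine ⟨{g | ∀ i ∈ (I : Set ℕ), g i = x i}, cyl_clopen x _ I.finite_toSet, fun i _ => rfl, ?_⟩
  intro g hg
  apply hsub
  intro i hi
  rw [hg i hi]
  exact (hv i hi).2

lemma exists_clopen_between_finite {u : Set (ℕ → Bool)} (hu : IsOpen u)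
    {F : Set (ℕ → Bool)} (hF : F.Finite) (hFu : F ⊆ u) :
    ∃ C, IsClopen C ∧ F ⊆ C ∧ C ⊆ u := by
  choose C hC hxC hCu using fun (x : F) => exists_clopen_between hu (hFu x.2)
  have : Finite F := hF
  exact ⟨⋃ x : F, C x, isClopen_iUnion_of_finite hC,
    fun x hx => Set.mem_iUnion.2 ⟨⟨x, hx⟩, hxC ⟨x, hx⟩⟩,
    Set.iUnion_subset hCu⟩

lemma clopen_determined {C : Set (ℕ → Bool)} (hC : IsClopen C) :
    ∃ N : ℕ, ∀ f g : ℕ → Bool, (∀ i < N, f i = g i) → f ∈ C → g ∈ C := by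
  have hcomp : IsCompact C := hC.isClosed.isCompact
  have key : ∀ f : C, ∃ N : ℕ, {g : ℕ → Bool | ∀ i < N, g i = (f : ℕ → Bool) i} ⊆ C := by
    rintro ⟨f, hf⟩
    obtain ⟨I, v, hv, hsub⟩ := isOpen_pi_iff.1 hC.isOpen f hf
    refine ⟨(I.sup id) + 1, fun g hg => hsub fun i hi => ?_⟩
    rw [hg i (Nat.lt_succ_of_le (Finset.le_sup (f := id) hi))]
    exact (hv i hi).2
  choose N hN using key
  have hcover : C ⊆ ⋃ f : C, {g : ℕ → Bool | ∀ i < N f, g i = (f : ℕ → Bool) i} :=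
    fun f hf => Set.mem_iUnion.2 ⟨⟨f, hf⟩, fun i _ => rfl⟩
  obtain ⟨t, ht⟩ := hcomp.elim_finite_subcover _
    (fun f : C => cyl_clopen (f : ℕ → Bool) {i | i < N f} (Set.finite_Iio (N f)) |>.isOpen) hcover
  refine ⟨t.sup N + 1, fun f g hfg hf => ?_⟩
  have := ht hf
  simp only [Set.mem_iUnion, Set.mem_setOf_eq] at this
  obtain ⟨h, hht, hfh⟩ := this
  refine hN h fun i hi => ?_
  rw [← hfg i (Nat.lt_succ_of_le (le_trans (Nat.le_of_lt_succ (Nat.lt_succ_of_lt hi)) (Finset.le_sup hht)))]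
  exact hfh i hi

lemma clopen_countable : {C : Set (ℕ → Bool) | IsClopen C}.Countable := by
  have : {C : Set (ℕ → Bool) | IsClopen C} ⊆
      ⋃ N : ℕ, Set.range (fun S : Set (Fin N → Bool) => (fun f (i : Fin N) => f i.val) ⁻¹' S) := by
    intro C hC
    obtain ⟨N, hN⟩ := clopen_determined hC
    refine Set.mem_iUnion.2 ⟨N, ⟨(fun f (i : Fin N) => f i.val) '' C, ?_⟩⟩
    ext g
    simp only [Set.mem_preimage, Set.mem_image]
    constructor
    · rintro ⟨f, hf, hfg⟩
      exact hN f g (fun i hi => congrFun hfg ⟨i, hi⟩) hf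
    · intro hg; exact ⟨g, hg, rfl⟩
  exact Set.Countable.mono this (Set.countable_iUnion fun N => Set.countable_range _)

/-- Any response of a winning strategy to a legal position is clopen and contains the last move. -/
lemma response_spec {X : Set (ℕ → Bool)} {σ : List (Set (ℕ → Bool)) → Set (ℕ → Bool)}
    (hσ : WinningForC X σ) (l : List (Set (ℕ → Bool))) (F : Set (ℕ → Bool))
    (hl : ∀ s ∈ l, s.Finite ∧ s ⊆ X) (hF : F.Finite) (hFX : F ⊆ X) :
    IsClopen (σ (l ++ [F])) ∧ F ⊆ σ (l ++ [F]) := by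
  classical
  set G : ℕ → Set (ℕ → Bool) := fun i => (l ++ [F]).getD i ∅ with hG
  have hlegal : ∀ n, (G n).Finite ∧ G n ⊆ X := by
    intro n
    by_cases hn : n < (l ++ [F]).length
    · have h1 : G n = (l ++ [F])[n] := List.getD_eq_getElem _ _ hn
      have hmem : (l ++ [F])[n] ∈ l ++ [F] := List.getElem_mem _
      rw [h1]
      rcases List.mem_append.1 hmem with h | h
      · exact hl _ h
      · simp only [List.mem_singleton] at h
        rw [h]; exact ⟨hF, hFX⟩
    · have h1 : G n = ∅ := List.getD_eq_default _ _ (not_lt.1 hn)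
      rw [h1]; exact ⟨Set.finite_empty, Set.empty_subset X⟩
  have hmap : (List.range (l.length + 1)).map G = l ++ [F] := by
    apply List.ext_getElem
    · simp
    · intro i h1 h2
      simp only [List.getElem_map, List.getElem_range]
      exact List.getD_eq_getElem _ _ h2
  have hlast : G l.length = F := by
    simp [hG, List.getD]
  have h1 := (hσ G hlegal).1 l.length
  simp only [playC] at h1
  rw [hmap, hlast] at h1
  exact h1

/-- γ-covers are stable under injective reindexing -/
lemma gammaCover_reindex {X : Set (ℕ → Bool)} {V : ℕ → Set (ℕ → Bool)} (hV : IsGammaCover X V)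
    {j : ℕ → ℕ} (hj : Function.Injective j) {W : ℕ → Set (ℕ → Bool)}
    (hW : ∀ n, W n = V (j n)) : IsGammaCover X W := by
  constructor
  · intro n; rw [hW n]; exact hV.1 (j n)
  · intro x hx
    obtain ⟨K, hK⟩ := eventually_atTop.1 (hV.2 x hx)
    rw [← Nat.cofinite_eq_atTop, eventually_cofinite]
    have hsub : {n | ¬ x ∈ W n} ⊆ j ⁻¹' (Set.Iio K) := by
      intro n hn
      simp only [Set.mem_setOf_eq, hW n] at hn
      by_contra hc
      exact hn (hK (j n) (not_lt.1 hc))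
    exact Set.Finite.subset ((Set.finite_Iio K).preimage (hj.injOn)) hsub

/-- history along a coded branch -/
def histAux (W : List (Set (ℕ → Bool)) → Set (ℕ → Bool) → Set (ℕ → Bool))
    (e : ℕ → Set (ℕ → Bool)) : List ℕ → List (Set (ℕ → Bool))
  | [] => []
  | m :: s => histAux W e s ++ [W (histAux W e s) (e m)]

def branchAux (idx : ℕ → ℕ) : ℕ → List ℕ
  | 0 => []
  | n + 1 => idx (Encodable.encode (branchAux idx n)) :: branchAux idx n

lemma no_winning_of_gamma {X : Set (ℕ → Bool)} (S1 : S1OmegaGamma X) :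
    ¬ ∃ σ : List (Set (ℕ → Bool)) → Set (ℕ → Bool), WinningForC X σ := by
  classical
  rintro ⟨σ, hσ⟩
  -- witness selector
  have Wspec : ∀ (h : List (Set (ℕ → Bool))) (Cc : Set (ℕ → Bool)), ∃ F : Set (ℕ → Bool),
      (F.Finite ∧ F ⊆ X) ∧
      ((∃ F', F'.Finite ∧ F' ⊆ X ∧ σ (h ++ [F']) = Cc) → σ (h ++ [F]) = Cc) := by
    intro h Cc
    by_cases hex : ∃ F', F'.Finite ∧ F' ⊆ X ∧ σ (h ++ [F']) = Cc
    · obtain ⟨F, hF1, hF2, hF3⟩ := hex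
      exact ⟨F, ⟨hF1, hF2⟩, fun _ => hF3⟩
    · exact ⟨∅, ⟨Set.finite_empty, Set.empty_subset X⟩, fun hc => absurd hc hex⟩
  choose W hW1 hW2 using Wspec
  obtain ⟨e, he⟩ := clopen_countable.exists_eq_range ⟨∅, isClopen_empty⟩
  set hist := histAux W e with hhist
  have hist_legal : ∀ s, ∀ A ∈ hist s, A.Finite ∧ A ⊆ X := by
    intro s
    induction s with
    | nil => simp [hhist, histAux]
    | cons m s ih =>
      intro A hA
      rw [hhist, histAux] at hA
      rcases List.mem_append.1 hA with h | h
      · exact ih A h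
      · simp only [List.mem_singleton] at h
        rw [h]; exact hW1 _ _
  -- the ω-covers
  set Cov : List (Set (ℕ → Bool)) → Set (Set (ℕ → Bool)) :=
    fun h => {D | ∃ F, F.Finite ∧ F ⊆ X ∧ σ (h ++ [F]) = D} with hCov
  have cov_sub : ∀ s, Cov (hist s) ⊆ {C | IsClopen C} := by
    rintro s D ⟨F, hF1, hF2, hF3⟩
    rw [← hF3]
    exact (response_spec hσ _ F (hist_legal s) hF1 hF2).1
  have cov_omega : ∀ s, IsOmegaCover X (Cov (hist s)) := by
    intro s
    refine ⟨Set.Countable.mono (cov_sub s) clopen_countable, ?_, ?_⟩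
    · rintro u ⟨F, hF1, hF2, hF3⟩
      rw [← hF3]
      exact (response_spec hσ _ F (hist_legal s) hF1 hF2).1.isOpen
    · intro F hFX hFfin
      exact ⟨σ (hist s ++ [F]), ⟨F, hFfin, hFX, rfl⟩,
        (response_spec hσ _ F (hist_legal s) hFfin hFX).2⟩
  set d : ℕ → List ℕ := Denumerable.ofNat (List ℕ) with hd
  obtain ⟨V, hV, hVγ⟩ := S1 (fun k => Cov (hist (d k))) (fun k => cov_omega (d k))
  have hVrange : ∀ k, ∃ m, e m = V k := by
    intro k
    have : V k ∈ {C | IsClopen C} := cov_sub (d k) (hV k)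
    rw [he] at this
    exact this
  choose idx hidx using hVrange
  set g := branchAux idx with hg
  set F : ℕ → Set (ℕ → Bool) :=
    fun n => W (hist (g n)) (e (idx (Encodable.encode (g n)))) with hF
  have hist_succ : ∀ n, hist (g (n + 1)) = hist (g n) ++ [F n] := by
    intro n
    rw [hg, branchAux, hhist, histAux]
  have Flegal : ∀ n, (F n).Finite ∧ F n ⊆ X := fun n => hW1 _ _
  have hmapF : ∀ n, (List.range (n + 1)).map F = hist (g (n + 1)) := by
    intro n
    induction n with
    | zero =>
      rw [hist_succ 0, List.range_succ]
      simp [hg, branchAux, hhist, histAux]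
    | succ n ih =>
      rw [List.range_succ, List.map_append, ih, hist_succ (n + 1)]
      simp
  have hplay : ∀ n, playC σ F n = V (Encodable.encode (g n)) := by
    intro n
    have hk := hV (Encodable.encode (g n))
    rw [hCov] at hk
    simp only [Set.mem_setOf_eq, hd, Denumerable.ofNat_encode] at hk
    have := hW2 (hist (g n)) (V (Encodable.encode (g n))) hk
    rw [playC, hmapF n, hist_succ n]
    simp only [hF, hidx]
    exact this
  have glen : ∀ n, (g n).length = n := by
    intro n
    induction n with
    | zero => rfl
    | succ n ih => rw [hg, branchAux]; simp [← hg, ih]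
  have hjinj : Function.Injective (fun n => Encodable.encode (g n)) := by
    intro a b hab
    have := Encodable.encode_injective hab
    have : (g a).length = (g b).length := by rw [this]
    rwa [glen, glen] at this
  have hγ : IsGammaCover X (playC σ F) :=
    gammaCover_reindex hVγ hjinj hplay
  exact (hσ F Flegal).2 hγ

lemma gamma_of_no_winning {X : Set (ℕ → Bool)}
    (h : ¬ ∃ σ : List (Set (ℕ → Bool)) → Set (ℕ → Bool), WinningForC X σ) :
    IsGammaSet X := by
  classical
  intro U hU
  have key : ∀ F : Set (ℕ → Bool), ∃ p : Set (ℕ → Bool) × Set (ℕ → Bool),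
      (F.Finite ∧ F ⊆ X) →
      (p.1 ∈ U ∧ F ⊆ p.1 ∧ IsClopen p.2 ∧ F ⊆ p.2 ∧ p.2 ⊆ p.1) := by
    intro F
    by_cases hF : F.Finite ∧ F ⊆ X
    · obtain ⟨u, hu, hFu⟩ := hU.2.2 F hF.2 hF.1
      obtain ⟨C, hC, hFC, hCu⟩ := exists_clopen_between_finite (hU.2.1 u hu) hF.1 hFu
      exact ⟨(u, C), fun _ => ⟨hu, hFu, hC, hFC, hCu⟩⟩
    · exact ⟨(∅, ∅), fun hc => absurd hc hF⟩
  choose p hp using key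
  set σ : List (Set (ℕ → Bool)) → Set (ℕ → Bool) :=
    fun l => (p (l.getLast?.getD ∅)).2 with hσdef
  have hplay : ∀ (F : ℕ → Set (ℕ → Bool)) (n : ℕ), playC σ F n = (p (F n)).2 := by
    intro F n
    rw [playC, hσdef]
    simp only [List.range_succ, List.map_append, List.map_cons, List.map_nil,
      List.getLast?_concat, Option.getD_some]
  have hnw : ¬ WinningForC X σ := fun hw => h ⟨σ, hw⟩
  rw [WinningForC] at hnw
  push_neg at hnw
  obtain ⟨F, hFlegal, hconc⟩ := hnw
  have hconds : ∀ n, IsClopen (playC σ F n) ∧ F n ⊆ playC σ F n := by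
    intro n
    rw [hplay F n]
    obtain ⟨_, _, h3, h4, _⟩ := hp (F n) (hFlegal n)
    exact ⟨h3, h4⟩
  have hγ : IsGammaCover X (playC σ F) := hconc hconds
  refine ⟨fun n => (p (F n)).1, fun n => (hp (F n) (hFlegal n)).1, ?_, ?_⟩
  · intro n; exact hU.2.1 _ (hp (F n) (hFlegal n)).1
  · intro x hx
    refine (hγ.2 x hx).mono fun n hn => ?_
    have := hplay F n ▸ hn
    exact (hp (F n) (hFlegal n)).2.2.2.2 this

theorem gamma_set_iff_C_has_no_winning_strategy
    (X : Set (ℕ → Bool))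
    (gerlitsNagy : IsGammaSet X → S1OmegaGamma X) :
    IsGammaSet X ↔ ¬ ∃ σ : List (Set (ℕ → Bool)) → Set (ℕ → Bool), WinningForC X σ := by
  constructor
  · intro hX
    exact no_winning_of_gamma (gerlitsNagy hX)
  · exact gamma_of_no_winning
end

section
/- Let {f_α : α < κ} ⊆ ω^ω be strictly increasing functions forming a scale (i.e., ≤*-increasing and dominating). Let X ⊆ P(ω) be the set of their ranges. Then X is not a λ'-set: for every open U ⊆ P(ω) containing all finite subsets of ω, the range of f_α belongs to U for all but fewer than cofinally many α; in particular no G_δ set G satisfies G ∩ (X ∪ [ω]^{<ω}) = [ω]^{<ω}. -/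
open Filter Set

/-- The set of characteristic functions of finite subsets of ω. -/
def FinSets : Set (ℕ → Bool) := {x | {n | x n = true}.Finite}

/-!
The complement `K` of an open `U ⊇ [ω]^{<ω}` is compact and consists of infinite sets, so some
`g ∈ ω^ω` satisfies: every `x ∈ K` has more than `n` elements below `g n`. The range of a strictly
increasing `h` has at most `n` elements below `h n`, so it lies in `U` as soon as `g n ≤ h n` for a
single `n`; this holds for every `f a` beyond a scale member dominating `g`. A scale has no
countable cofinal subset, so some `f b` has its range in every member of a countable family of
open sets containing `[ω]^{<ω}`; that range is infinite, which rules out a `G_δ` set as in the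
statement.
-/

theorem continuous_count_eq_true (m : ℕ) :
    Continuous fun x : ℕ → Bool => Nat.count (fun i => x i = true) m := by
  induction m with
  | zero => simpa using continuous_const
  | succ m ih =>
    simp only [Nat.count_succ]
    exact ih.add <|
      (continuous_of_discreteTopology (f := fun b : Bool => if b = true then 1 else 0)).comp
        (continuous_apply m)

theorem IsCompact.exists_lt_count_eq_true {K : Set (ℕ → Bool)} (hK : IsCompact K)
    (hinf : ∀ x ∈ K, {i | x i = true}.Infinite) (n : ℕ) :
    ∃ m, ∀ x ∈ K, n < Nat.count (fun i => x i = true) m := by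
  have hcover : K ⊆ ⋃ m, {x | n < Nat.count (fun i => x i = true) m} := fun x hx =>
    mem_iUnion.2 ⟨Nat.nth (fun i => x i = true) n + 1, by
      rw [Set.mem_ofPred_eq, Nat.count_succ, Nat.count_nth_of_infinite (hinf x hx),
        if_pos (Nat.nth_mem_of_infinite (hinf x hx) n)]
      exact Nat.lt_succ_self n⟩
  simpa only [subset_def, mem_ofPred_eq] using hK.elim_directed_cover _
    (fun m => isOpen_lt continuous_const (continuous_count_eq_true m)) hcover
    (Monotone.directed_le fun m m' hmm' x hx => hx.trans_le (Nat.count_monotone _ hmm'))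

theorem StrictMono.count_le {f : ℕ → ℕ} (hf : StrictMono f) {p : ℕ → Prop} [DecidablePred p]
    (hp : ∀ i, p i ↔ i ∈ range f) {m n : ℕ} (hm : m ≤ f n) : Nat.count p m ≤ n := by
  rw [Nat.count_eq_card_filter_range]
  calc ((Finset.range m).filter p).card ≤ ((Finset.range n).image f).card := by
        refine Finset.card_le_card fun i hi => ?_
        obtain ⟨him, hpi⟩ := Finset.mem_filter.1 hi
        obtain ⟨j, rfl⟩ := (hp i).1 hpi
        exact Finset.mem_image_of_mem f (Finset.mem_range.2
          (hf.lt_iff_lt.1 ((Finset.mem_range.1 him).trans_le hm)))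
    _ ≤ n := Finset.card_image_le.trans (Finset.card_range n).le

theorem exists_forall_eventually_lt (u : ℕ → ℕ → ℕ) :
    ∃ g : ℕ → ℕ, ∀ i, ∀ᶠ n in atTop, u i n < g n :=
  ⟨fun n => (Finset.range (n + 1)).sup (fun i => u i n) + 1, fun i =>
    eventually_atTop.2 ⟨i, fun n hn => Nat.lt_succ_of_le
      (Finset.le_sup (f := fun i => u i n) (Finset.mem_range.2 (Nat.lt_succ_of_le hn)))⟩⟩

section Scale

variable {ι : Type*} [LinearOrder ι] {f : ι → ℕ → ℕ}

theorem lt_of_eventually_lt (hinc : ∀ a b : ι, a < b → ∀ᶠ n in atTop, f a n < f b n) {a b : ι}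
    (h : ∀ᶠ n in atTop, f a n < f b n) : a < b := by
  by_contra! hba
  rcases hba.eq_or_lt with rfl | hba
  · exact h.exists.elim fun n hn => lt_irrefl _ hn
  · exact ((hinc b a hba).and h).exists.elim fun n hn => lt_asymm hn.1 hn.2

theorem exists_forall_lt_of_dominating (hinc : ∀ a b : ι, a < b → ∀ᶠ n in atTop, f a n < f b n)
    (hdom : ∀ g : ℕ → ℕ, ∃ a : ι, ∀ᶠ n in atTop, g n ≤ f a n) (a : ℕ → ι) :
    ∃ b, ∀ i, a i < b := by
  obtain ⟨g, hg⟩ := exists_forall_eventually_lt fun i => f (a i)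
  obtain ⟨b, hb⟩ := hdom g
  exact ⟨b, fun i => lt_of_eventually_lt hinc
    ((hg i).and hb |>.mono fun n hn => hn.1.trans_le hn.2)⟩

theorem exists_forall_range_mem_of_finSets_subset (hsm : ∀ a : ι, StrictMono (f a))
    (hinc : ∀ a b : ι, a < b → ∀ᶠ n in atTop, f a n < f b n)
    (hdom : ∀ g : ℕ → ℕ, ∃ a : ι, ∀ᶠ n in atTop, g n ≤ f a n)
    {U : Set (ℕ → Bool)} (hU : IsOpen U) (hFU : FinSets ⊆ U) :
    ∃ a₀ : ι, ∀ a : ι, a₀ < a →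
      ∀ x : ℕ → Bool, (∀ n, x n = true ↔ n ∈ range (f a)) → x ∈ U := by
  have hinf : ∀ x ∈ Uᶜ, {i | x i = true}.Infinite := fun x hx hfin => hx (hFU hfin)
  choose g hg using hU.isClosed_compl.isCompact.exists_lt_count_eq_true hinf
  obtain ⟨a₀, ha₀⟩ := hdom g
  refine ⟨a₀, fun a ha x hx => by_contra fun hxU => ?_⟩
  obtain ⟨n, hgn, hn⟩ := (ha₀.and (hinc a₀ a ha)).exists
  exact (hg n x hxU).not_ge ((hsm a).count_le hx (hgn.trans hn.le))

end Scale

theorem scale_ranges_not_lambda_prime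
    {ι : Type*} [LinearOrder ι]
    (f : ι → (ℕ → ℕ))
    (hsm : ∀ a : ι, StrictMono (f a))
    (hinc : ∀ a b : ι, a < b → ∀ᶠ n in atTop, f a n < f b n)
    (hdom : ∀ g : ℕ → ℕ, ∃ a : ι, ∀ᶠ n in atTop, g n ≤ f a n)
    (X : Set (ℕ → Bool))
    (hX : X = {x | ∃ a : ι, ∀ n, x n = true ↔ n ∈ Set.range (f a)}) :
    (∀ U : Set (ℕ → Bool), IsOpen U → FinSets ⊆ U →
      ∃ a₀ : ι, ∀ a : ι, a₀ < a →
        ∀ x : ℕ → Bool, (∀ n, x n = true ↔ n ∈ Set.range (f a)) → x ∈ U) ∧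
    ¬ ∃ G : Set (ℕ → Bool), IsGδ G ∧ G ∩ (X ∪ FinSets) = FinSets := by
  have hmem := fun U (hU : IsOpen U) hFU =>
    exists_forall_range_mem_of_finSets_subset hsm hinc hdom hU hFU
  refine ⟨hmem, ?_⟩
  rintro ⟨G, hG, hGeq⟩
  obtain ⟨V, hVopen, rfl⟩ := hG.eq_iInter_nat
  have hFV (i : ℕ) : FinSets ⊆ V i := hGeq.ge.trans (inter_subset_left.trans (iInter_subset V i))
  choose a₀ ha₀ using fun i => hmem (V i) (hVopen i) (hFV i)
  obtain ⟨b, hb⟩ := exists_forall_lt_of_dominating hinc hdom a₀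
  classical
  let x : ℕ → Bool := fun n => decide (n ∈ range (f b))
  have hx (n : ℕ) : x n = true ↔ n ∈ range (f b) := decide_eq_true_iff
  have hxF : {n | x n = true}.Finite :=
    hGeq.le ⟨mem_iInter.2 fun i => ha₀ i b (hb i) x hx, Or.inl (hX ▸ ⟨b, hx⟩)⟩
  exact infinite_range_of_injective (hsm b).injective (Set.ext hx ▸ hxF)
end

section
/- Let D = {x_n : n < ω} ⊆ 2^ω, Y ⊆ 2^ω, Z = Y \ D, and for z ∈ Z define f_z(n) = least m with x_n↾m ≠ z↾m. Suppose ⋂_n U_n is a G_δ set (U_n open) with (⋂_n U_n) ∩ (Y ∪ D) = D, and for each n choose g_n ∈ ω^ω such that [x_m↾g_n(m)] ⊆ U_n for all m. Then for every z ∈ Z there exists n such that f_z(m) ≤ g_n(m) for every m; in particular the family {f_z : z ∈ Z} is dominated pointwise by the countable family {g_n}. -/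
open Filter Set

theorem Gdelta_separation_gives_dominating_family
    (x : ℕ → (ℕ → Bool)) (Y : Set (ℕ → Bool))
    (F : (ℕ → Bool) → ℕ → ℕ)
    (hF : ∀ z ∈ Y \ Set.range x, ∀ n : ℕ,
      F z n = sInf {m | ∃ i < m, x n i ≠ z i})
    (U : ℕ → Set (ℕ → Bool)) (hUopen : ∀ n, IsOpen (U n))
    (heq : (⋂ n, U n) ∩ (Y ∪ Set.range x) = Set.range x)
    (g : ℕ → ℕ → ℕ)
    (hg : ∀ n m : ℕ, {y : ℕ → Bool | ∀ i < g n m, y i = x m i} ⊆ U n) :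
    ∀ z ∈ Y \ Set.range x, ∃ n : ℕ, ∀ m : ℕ, F z m ≤ g n m := by
  intro z hz
  have hznot : z ∉ ⋂ n, U n := by
    intro h
    have : z ∈ Set.range x := by
      rw [← heq]; exact ⟨h, Or.inl hz.1⟩
    exact hz.2 this
  rw [Set.mem_iInter] at hznot
  push_neg at hznot
  obtain ⟨n, hn⟩ := hznot
  refine ⟨n, fun m => ?_⟩
  by_cases hcase : ∀ i < g n m, z i = x m i
  · exact absurd (hg n m hcase) hn
  · push_neg at hcase
    obtain ⟨i, hi, hne⟩ := hcase
    rw [hF z hz m]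
    exact Nat.sInf_le ⟨i, hi, fun h => hne h.symm⟩
end

section
/- A set Y ⊆ 2^ω fails to be a λ'-set as witnessed by a countable set D if and only if the associated family of 'splitting-time' functions is, modulo countably many dominators, unbounded: precisely, if D = {x_n : n < ω} and f_z(n) = least m with x_n↾m ≠ z↾m for z ∈ Y \ D, then there exists a G_δ set G with G ∩ (Y ∪ D) = D if and only if there is a countable family {g_k : k < ω} ⊆ ω^ω such that every f_z (z ∈ Y \ D) is pointwise dominated by some g_k. -/
open Filter Set

theorem lambda_prime_failure_iff_splitting_functions_unbounded
    (x : ℕ → (ℕ → Bool)) (Y : Set (ℕ → Bool))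
    (F : (ℕ → Bool) → ℕ → ℕ)
    (hF : ∀ z ∈ Y \ Set.range x, ∀ n : ℕ,
      F z n = sInf {m | ∃ i < m, x n i ≠ z i}) :
    (∃ G : Set (ℕ → Bool), IsGδ G ∧ G ∩ (Y ∪ Set.range x) = Set.range x) ↔
    (∃ g : ℕ → ℕ → ℕ, ∀ z ∈ Y \ Set.range x, ∃ k : ℕ, ∀ m : ℕ, F z m ≤ g k m) := by
  have hne : ∀ z ∈ Y \ Set.range x, ∀ n : ℕ,
      {m | ∃ i < m, x n i ≠ z i}.Nonempty := by
    intro z hz n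
    have : x n ≠ z := fun h => hz.2 ⟨n, h⟩
    obtain ⟨i, hi⟩ := Function.ne_iff.mp this
    exact ⟨i + 1, i, Nat.lt_succ_self i, hi⟩
  constructor
  · rintro ⟨G, hG, hGeq⟩
    obtain ⟨V, hVopen, rfl⟩ := isGδ_iff_eq_iInter_nat.mp hG
    have hxG : ∀ n k, x n ∈ V k := by
      intro n k
      have hm : x n ∈ Set.range x := ⟨n, rfl⟩
      rw [← hGeq] at hm
      exact Set.mem_iInter.mp hm.1 k
    have key : ∀ n k, ∃ N : ℕ, ∀ y : ℕ → Bool,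
        (∀ i < N, y i = x n i) → y ∈ V k := by
      intro n k
      obtain ⟨I, u, h1, h2⟩ := (isOpen_pi_iff.mp (hVopen k)) (x n) (hxG n k)
      refine ⟨I.sup id + 1, fun y hy => h2 ?_⟩
      rw [Set.mem_pi]
      intro i hi
      rw [Finset.mem_coe] at hi
      have hiN : i < I.sup id + 1 := by
        have : id i ≤ I.sup id := Finset.le_sup hi
        simpa using Nat.lt_succ_of_le this
      rw [hy i hiN]
      exact (h1 i hi).2
    choose N hN using key
    refine ⟨fun k n => N n k, fun z hz => ?_⟩
    have hzG : z ∉ ⋂ k, V k := by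
      intro h
      exact hz.2 (hGeq ▸ ⟨h, Or.inl hz.1⟩)
    obtain ⟨k, hk⟩ := by
      simpa [Set.mem_iInter] using hzG
    refine ⟨k, fun m => ?_⟩
    by_contra hlt
    push_neg at hlt
    have hagree : ∀ i < N m k, z i = x m i := by
      by_contra h
      push_neg at h
      obtain ⟨i, hi, hne'⟩ := h
      have : F z m ≤ N m k := by
        rw [hF z hz m]
        exact Nat.sInf_le ⟨i, hi, Ne.symm hne'⟩
      omega
    exact hk (hN m k z hagree)
  · rintro ⟨g, hg⟩
    have cylOpen : ∀ (c : ℕ → Bool) (M : ℕ),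
        IsOpen {y : ℕ → Bool | ∀ i < M, y i = c i} := by
      intro c M
      have : {y : ℕ → Bool | ∀ i < M, y i = c i}
          = Set.pi ↑(Finset.range M) (fun i => {c i}) := by
        ext y; simp [Set.mem_pi]
      rw [this]
      exact isOpen_set_pi (Finset.finite_toSet _) (fun i _ => isOpen_discrete _)
    refine ⟨⋂ k, ⋃ n, {y : ℕ → Bool | ∀ i < g k n, y i = x n i}, ?_, ?_⟩
    · exact .iInter fun k => ((isOpen_iUnion fun n => cylOpen (x n) (g k n)).isGδ)
    · apply Set.Subset.antisymm
      · rintro y ⟨hyG, hy⟩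
        rcases hy with hy | hy
        · by_contra hyr
          obtain ⟨k, hk⟩ := hg y ⟨hy, hyr⟩
          have := Set.mem_iInter.mp hyG k
          obtain ⟨n, hn⟩ := Set.mem_iUnion.mp this
          have hmem : F y n ∈ {m | ∃ i < m, x n i ≠ y i} := by
            rw [hF y ⟨hy, hyr⟩ n]
            exact Nat.sInf_mem (hne y ⟨hy, hyr⟩ n)
          obtain ⟨i, hi, hne'⟩ := hmem
          exact hne' ((hn i (lt_of_lt_of_le hi (hk n))).symm)
        · exact hy
      · rintro y ⟨n, rfl⟩
        refine ⟨Set.mem_iInter.mpr fun k => Set.mem_iUnion.mpr ⟨n, fun i _ => rfl⟩,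
          Or.inr ⟨n, rfl⟩⟩
end

section
/- If Y ⊆ 2^ω has cardinality less than b (the bounding number) then Y is a λ'-set. -/
open Filter Set

/-- The bounding number 𝔟. -/
noncomputable def bNumber : Cardinal :=
  sInf {c | ∃ F : Set (ℕ → ℕ), Cardinal.mk F = c ∧
    ¬ ∃ g : ℕ → ℕ, ∀ f ∈ F, ∀ᶠ n in atTop, f n ≤ g n}

theorem small_sets_are_lambda_prime
    (Y : Set (ℕ → Bool)) (hY : Cardinal.mk Y < bNumber) :
    IsLambdaPrime Y := by
  intro A hA
  rcases A.eq_empty_or_nonempty with rfl | hne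
  · exact ⟨∅, IsGδ.empty, by simp⟩
  obtain ⟨x, rfl⟩ := hA.exists_eq_range hne
  -- every z not in the range disagrees with each x m somewhere
  have hdis : ∀ z : ℕ → Bool, z ∉ range x → ∀ m, ∃ i, z i ≠ x m i := by
    intro z hz m
    by_contra h
    push_neg at h
    exact hz ⟨m, funext fun i => (h i).symm⟩
  classical
  -- the modulus-of-disagreement functions
  set f : (ℕ → Bool) → ℕ → ℕ := fun z m =>
    if h : ∃ i, z i ≠ x m i then Nat.find h + 1 else 0 with hf
  set F : Set (ℕ → ℕ) := f '' (Y \ range x) with hFdef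
  -- F has size < b, hence is bounded
  have hb : ∃ g : ℕ → ℕ, ∀ h ∈ F, ∀ᶠ n in atTop, h n ≤ g n := by
    by_contra hc
    have h1 : bNumber ≤ Cardinal.mk F := csInf_le' ⟨F, rfl, hc⟩
    have h2 : Cardinal.mk F ≤ Cardinal.mk Y :=
      le_trans Cardinal.mk_image_le (Cardinal.mk_le_mk_of_subset diff_subset)
    exact absurd (lt_of_le_of_lt (h1.trans h2) hY) (lt_irrefl _)
  obtain ⟨g, hg⟩ := hb
  -- the Gδ set
  set U : ℕ → Set (ℕ → Bool) :=
    fun n => ⋃ m, {y | ∀ i < max n (g m), y i = x m i} with hU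
  refine ⟨⋂ n, U n, ?_, ?_⟩
  · refine IsGδ.iInter fun n => IsOpen.isGδ (isOpen_iUnion fun m => ?_)
    have : {y : ℕ → Bool | ∀ i < max n (g m), y i = x m i}
        = ⋂ i ∈ Finset.range (max n (g m)), {y : ℕ → Bool | y i = x m i} := by
      ext y; simp [Finset.mem_range]
    rw [this]
    refine isOpen_biInter_finset fun i _ => ?_
    have h2 : {y : ℕ → Bool | y i = x m i}
        = (fun y : ℕ → Bool => y i) ⁻¹' {x m i} := rfl
    rw [h2]
    exact (isOpen_discrete _).preimage (continuous_apply i)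
  · have hxG : ∀ m, x m ∈ ⋂ n, U n := by
      intro m
      refine mem_iInter.2 fun n => mem_iUnion.2 ⟨m, fun i _ => rfl⟩
    apply Subset.antisymm
    · rintro y ⟨hy1, hy2⟩
      by_contra hyA
      have hyY : y ∈ Y := hy1.resolve_right hyA
      -- y's modulus function is eventually bounded by g
      have hfF : f y ∈ F := ⟨y, ⟨hyY, hyA⟩, rfl⟩
      obtain ⟨N, hN⟩ := (hg (f y) hfF).exists_forall_of_atTop
      set n0 : ℕ := N + (Finset.range N).sup (f y) with hn0
      have := mem_iInter.1 hy2 n0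
      obtain ⟨m, hm⟩ := mem_iUnion.1 this
      have hEx : ∃ i, y i ≠ x m i := hdis y hyA m
      have hfy : f y m = Nat.find hEx + 1 := by simp [hf, hEx]
      have hlt : Nat.find hEx < max n0 (g m) := by
        rcases lt_or_ge m N with hmN | hmN
        · have : f y m ≤ (Finset.range N).sup (f y) :=
            Finset.le_sup (Finset.mem_range.2 hmN)
          have : Nat.find hEx < n0 := by omega
          exact lt_of_lt_of_le this (le_max_left _ _)
        · have : f y m ≤ g m := hN m hmN
          have : Nat.find hEx < g m := by omega
          exact lt_of_lt_of_le this (le_max_right _ _)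
      exact Nat.find_spec hEx (hm _ hlt)
    · rintro y ⟨m, rfl⟩
      exact ⟨Or.inr ⟨m, rfl⟩, hxG m⟩
end

section
/- If b = d then there exists a scale: a family {f_α : α < b} ⊆ ω^ω of strictly increasing functions that is <*-increasing and ≤*-dominating, and consequently (using that sets of size < b are λ'-sets) the set X of ranges of the f_α is a (†)-λ'-set which is not a λ'-set. -/
open Filter Set

/-- The dominating number 𝔡. -/
noncomputable def dNumber : Cardinal :=
  sInf {c | ∃ F : Set (ℕ → ℕ), Cardinal.mk F = c ∧
    ∀ g : ℕ → ℕ, ∃ f ∈ F, ∀ᶠ n in atTop, g n ≤ f n}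

/-- `G_g ⊆ 2^ω`: (characteristic functions of) infinite subsets of ω whose increasing
enumeration drops below `g` infinitely often. -/
def Gg (g : ℕ → ℕ) : Set (ℕ → Bool) :=
  {x | {n | x n = true}.Infinite ∧ ∃ᶠ n in atTop, Nat.nth (fun k => x k = true) n < g n}

/-- `X` is a `(†)`-λ'-set: `X ∩ G_g` is a λ'-set for every `g`. -/
def IsDaggerLambdaPrime (X : Set (ℕ → Bool)) : Prop :=
  ∀ g : ℕ → ℕ, IsLambdaPrime (X ∩ Gg g)

/-!
Under `𝔟 = 𝔡`, enumerate a dominating family as `(e_α)_{α < 𝔟}` and build the scale by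
transfinite recursion: fewer than `𝔟` functions precede stage `α`, so they have a common
`≤*`-bound, and `f_α` is any strictly increasing function above that bound and above `e_α`.

If `g ≤* f_α₀`, every `f_α` with `α > α₀` eventually exceeds `g`, so the range of `f_α` lies
outside `G_g`; hence `X ∩ G_g` has size `< 𝔟` and is a λ'-set. `X` is not a λ'-set: a `G_δ` set
`G` containing all finite sets has as complement a countable union of compact sets of infinite
sets, whose enumerations are pointwise bounded, so the enumerations of the members of `Gᶜ` are
`≤*`-bounded; as `X` is dominating, it meets `G`.
-/

open Cardinal Topology

theorem exists_eventually_le_of_mk_lt_bNumber {ι : Type} (F : ι → ℕ → ℕ) (h : #ι < bNumber) :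
    ∃ g : ℕ → ℕ, ∀ i, ∀ᶠ n in atTop, F i n ≤ g n := by
  by_contra hF
  refine (csInf_le' ⟨range F, rfl, ?_⟩ : bNumber ≤ #(range F)).not_gt (mk_range_le.trans_lt h)
  rintro ⟨g, hg⟩
  exact hF ⟨g, fun i => hg _ (mem_range_self i)⟩

theorem aleph0_le_bNumber : ℵ₀ ≤ bNumber := by
  refine le_csInf ⟨_, univ, rfl, ?_⟩ ?_
  · rintro ⟨g, hg⟩
    obtain ⟨n, hn⟩ := (hg (g · + 1) (mem_univ _)).exists
    omega
  · rintro _ ⟨F, rfl, hF⟩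
    by_contra! hfin
    have hF' : F.Finite := lt_aleph0_iff_set_finite.1 hfin
    refine hF ⟨fun n => ∑ f ∈ hF'.toFinset, f n, fun f hf => .of_forall fun n => ?_⟩
    exact Finset.single_le_sum (f := fun f : ℕ → ℕ => f n) (fun _ _ => Nat.zero_le _)
      (hF'.mem_toFinset.2 hf)

theorem mk_Iic_lt_bNumber (a : (ord bNumber).ToType) : #(Iic a) < bNumber := by
  have hIio : #(Iio a) < bNumber := by simpa using mk_Iio_lt a
  rw [← Iio_insert, mk_insert self_notMem_Iio]
  exact add_lt_of_lt aleph0_le_bNumber hIio (one_lt_aleph0.trans_le aleph0_le_bNumber)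

theorem exists_dominating_of_mk_eq_dNumber {ι : Type} (h : #ι = dNumber) :
    ∃ e : ι → ℕ → ℕ, ∀ g : ℕ → ℕ, ∃ a, ∀ᶠ n in atTop, g n ≤ e a n := by
  obtain ⟨D, hD, hdom⟩ := csInf_mem (s := {c | ∃ F : Set (ℕ → ℕ), #F = c ∧
      ∀ g : ℕ → ℕ, ∃ f ∈ F, ∀ᶠ n in atTop, g n ≤ f n})
    ⟨_, univ, rfl, fun g => ⟨g, mem_univ _, .of_forall fun _ => le_rfl⟩⟩
  obtain ⟨e⟩ := Cardinal.eq.1 (h.trans hD.symm)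
  refine ⟨fun a => e a, fun g => ?_⟩
  obtain ⟨f, hf, hgf⟩ := hdom g
  exact ⟨e.symm ⟨f, hf⟩, by simpa using hgf⟩

theorem exists_strictMono_gt (g : ℕ → ℕ) : ∃ c : ℕ → ℕ, StrictMono c ∧ ∀ n, g n < c n := by
  refine ⟨fun n => ∑ k ∈ Finset.range (n + 1), (g k + 1), strictMono_nat_of_lt_succ fun n => ?_,
    fun n => ?_⟩
  · rw [Finset.sum_range_succ _ (n + 1)]
    omega
  · exact Nat.lt_of_succ_le <| Finset.single_le_sum (f := fun k => g k + 1)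
      (fun _ _ => Nat.zero_le _) (Finset.self_mem_range_succ n)

section Scale

variable {ι : Type} [LinearOrder ι]

theorem exists_scale_step {a : ι} (ha : #(Iio a) < bNumber) (h : ℕ → ℕ)
    (F : ∀ b, b < a → ℕ → ℕ) :
    ∃ c : ℕ → ℕ, StrictMono c ∧ (∀ n, h n ≤ c n) ∧
      ∀ b (hb : b < a), ∀ᶠ n in atTop, F b hb n < c n := by
  obtain ⟨g, hg⟩ := exists_eventually_le_of_mk_lt_bNumber (fun b : Iio a => F b b.2) ha
  obtain ⟨c, hc, hgc⟩ := exists_strictMono_gt fun n => max (g n) (h n)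
  refine ⟨c, hc, fun n => (le_max_right _ _).trans (hgc n).le, fun b hb => ?_⟩
  exact (hg ⟨b, hb⟩).mono fun n hn => hn.trans_lt ((le_max_left _ _).trans_lt (hgc n))

theorem exists_scale [WellFoundedLT ι] (hι : ∀ a : ι, #(Iio a) < bNumber) {e : ι → ℕ → ℕ}
    (he : ∀ g : ℕ → ℕ, ∃ a, ∀ᶠ n in atTop, g n ≤ e a n) :
    ∃ f : ι → ℕ → ℕ, (∀ a, StrictMono (f a)) ∧
      (∀ a b, a < b → ∀ᶠ n in atTop, f a n < f b n) ∧
      ∀ g : ℕ → ℕ, ∃ a, ∀ᶠ n in atTop, g n ≤ f a n := by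
  choose c hc using fun a F => exists_scale_step (hι a) (e a) F
  let f := wellFounded_lt.fix c
  have hf : ∀ a, f a = c a fun b _ => f b := wellFounded_lt.fix_eq c
  refine ⟨f, fun a => hf a ▸ (hc a _).1, fun a b hab => ?_, fun g => ?_⟩
  · rw [hf b]
    exact (hc b fun b _ => f b).2.2 a hab
  · obtain ⟨a, ha⟩ := he g
    exact ⟨a, ha.mono fun n hn => hn.trans (hf a ▸ (hc a _).2.1 n)⟩

end Scale

theorem exists_le_max_of_eventually_le {u g : ℕ → ℕ} (h : ∀ᶠ k in atTop, u k ≤ g k) :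
    ∃ m, ∀ k, u k ≤ max (g k) m := by
  obtain ⟨N, hN⟩ := eventually_atTop.1 h
  refine ⟨∑ k ∈ Finset.range N, u k, fun k => ?_⟩
  rcases lt_or_ge k N with hk | hk
  · exact le_max_of_le_right <|
      Finset.single_le_sum (fun _ _ => Nat.zero_le _) (Finset.mem_range.2 hk)
  · exact le_max_of_le_left (hN k hk)

theorem isLambdaPrime_of_mk_lt_bNumber {α : Type} [TopologicalSpace α] [T1Space α]
    [FirstCountableTopology α] {X : Set α} (hX : #X < bNumber) : IsLambdaPrime X := by
  intro A hA
  rcases A.eq_empty_or_nonempty with rfl | hne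
  · exact ⟨∅, isOpen_empty.isGδ, by simp⟩
  obtain ⟨v, rfl⟩ := hA.exists_eq_range hne
  choose U hU using fun a : α => (𝓝 a).exists_antitone_basis
  have hleave : ∀ x : ↥(X \ range v), ∀ k, ∀ᶠ j in atTop, x.1 ∉ U (v k) j := fun x k =>
    ((hU (v k)).eventually_subset (compl_singleton_mem_nhds fun h => x.2.2 ⟨k, h⟩)).mono
      fun _ hj hx => hj hx rfl
  choose J hJ using fun x k => eventually_atTop.1 (hleave x k)
  obtain ⟨g, hg⟩ := exists_eventually_le_of_mk_lt_bNumber J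
    ((mk_le_mk_of_subset sdiff_subset).trans_lt hX)
  -- `x ∈ X \ range v` lies in no `U (v k) j` with `j ≥ J x k`, and `J x k ≤ max (g k) m` for
  -- all `k` once `m` is large, so `x` misses the `m`-th open set below
  refine ⟨⋂ m, ⋃ k, interior (U (v k) (max (g k) m)),
    .iInter_of_isOpen fun m => isOpen_iUnion fun k => isOpen_interior,
    Subset.antisymm ?_ fun x hx => ⟨Or.inr hx, ?_⟩⟩
  · rintro y ⟨hy, hyG⟩
    by_contra hyv
    have hyX : y ∈ X \ range v := ⟨hy.resolve_right hyv, hyv⟩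
    obtain ⟨m, hm⟩ := exists_le_max_of_eventually_le (hg ⟨y, hyX⟩)
    obtain ⟨k, hk⟩ := mem_iUnion.1 (mem_iInter.1 hyG m)
    exact hJ ⟨y, hyX⟩ k _ (hm k) (interior_subset hk)
  · obtain ⟨k, rfl⟩ := hx
    exact mem_iInter.2 fun m => mem_iUnion.2 ⟨k, mem_interior_iff_mem_nhds.2 ((hU _).mem _)⟩

theorem infinite_of_forall_iff_mem_range {x : ℕ → Bool} {f : ℕ → ℕ} (hf : Function.Injective f)
    (hx : ∀ n, x n = true ↔ n ∈ range f) : {n | x n = true}.Infinite :=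
  (infinite_range_of_injective hf).mono fun n hn => (hx n).2 hn

theorem nth_eq_of_forall_iff_mem_range {x : ℕ → Bool} {f : ℕ → ℕ} (hf : StrictMono f)
    (hx : ∀ n, x n = true ↔ n ∈ range f) : Nat.nth (x · = true) = f := by
  funext n
  have := Nat.nth_comp_of_strictMono (n := n) hf (fun k => (hx k).1)
    fun hfin => absurd hfin (infinite_of_forall_iff_mem_range hf.injective hx)
  simpa [hx] using this.symm

theorem continuous_count_true (N : ℕ) :
    Continuous fun x : ℕ → Bool => Nat.count (x · = true) N := by
  induction N with
  | zero => simpa using continuous_const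
  | succ N ih =>
    simp only [Nat.count_succ]
    exact ih.add <| (continuous_of_discreteTopology
      (f := fun b : Bool => if b = true then 1 else 0)).comp (continuous_apply N)

theorem IsCompact.exists_forall_nth_lt {K : Set (ℕ → Bool)} (hK : IsCompact K)
    (hinf : ∀ x ∈ K, {n | x n = true}.Infinite) (m : ℕ) :
    ∃ N, ∀ x ∈ K, Nat.nth (x · = true) m < N := by
  obtain ⟨N, hN⟩ := hK.elim_directed_cover (fun N => {x | m < Nat.count (x · = true) N})
    (fun N => isOpen_lt continuous_const (continuous_count_true N))
    (fun x hx => mem_iUnion.2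
      ⟨Nat.nth (x · = true) m + 1, by simp [Nat.count_nth_succ_of_infinite (hinf x hx)]⟩)
    (Monotone.directed_le fun _ _ h _ hx => hx.trans_le (Nat.count_monotone _ h))
  exact ⟨N, fun x hx => Nat.nth_lt_of_lt_count (hN hx)⟩

theorem exists_eventually_nth_lt_of_isGδ {G : Set (ℕ → Bool)} (hG : IsGδ G)
    (hfin : ∀ x : ℕ → Bool, {n | x n = true}.Finite → x ∈ G) :
    ∃ g : ℕ → ℕ, ∀ x ∉ G, ∀ᶠ m in atTop, Nat.nth (x · = true) m < g m := by
  obtain ⟨U, hUo, rfl⟩ := isGδ_iff_eq_iInter_nat.1 hG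
  have hinf : ∀ n, ∀ x ∈ (U n)ᶜ, {k | x k = true}.Infinite :=
    fun n x hx hxfin => hx (mem_iInter.1 (hfin x hxfin) n)
  choose B hB using fun n => (hUo n).isClosed_compl.isCompact.exists_forall_nth_lt (hinf n)
  refine ⟨fun m => ∑ n ∈ Finset.range (m + 1), B n m, fun x hx => ?_⟩
  obtain ⟨n, hn⟩ : ∃ n, x ∈ (U n)ᶜ := by simpa using hx
  filter_upwards [eventually_ge_atTop n] with m hm
  exact (hB n m x hn).trans_le <| Finset.single_le_sum (f := fun n => B n m)
    (fun _ _ => Nat.zero_le _) (Finset.mem_range.2 (Nat.lt_succ_of_le hm))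

theorem not_isLambdaPrime_of_dominating {X : Set (ℕ → Bool)}
    (hinf : ∀ x ∈ X, {n | x n = true}.Infinite)
    (hdom : ∀ g : ℕ → ℕ, ∃ x ∈ X, ∀ᶠ m in atTop, g m ≤ Nat.nth (x · = true) m) :
    ¬ IsLambdaPrime X := by
  intro hX
  have hA : {x : ℕ → Bool | {n | x n = true}.Finite}.Countable :=
    Countable.ofPred_finite.preimage (f := fun x : ℕ → Bool => {n | x n = true})
      fun x y h => funext fun n => Bool.eq_iff_iff.2 (Set.ext_iff.1 h n)
  obtain ⟨G, hG, hXG⟩ := hX _ hA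
  obtain ⟨g, hg⟩ := exists_eventually_nth_lt_of_isGδ hG fun x hx =>
    (hXG.symm.subset.trans inter_subset_right) hx
  obtain ⟨x, hxX, hx⟩ := hdom g
  have hxG : x ∉ G := fun hxG => hinf x hxX (hXG.subset ⟨Or.inl hxX, hxG⟩)
  obtain ⟨m, h1, h2⟩ := (hx.and (hg x hxG)).exists
  omega

theorem isDaggerLambdaPrime_of_scale {ι : Type} [LinearOrder ι]
    (hι : ∀ a : ι, #(Iic a) < bNumber) {f : ι → ℕ → ℕ} (hmono : ∀ a, StrictMono (f a))
    (hlt : ∀ a b, a < b → ∀ᶠ n in atTop, f a n < f b n)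
    (hdom : ∀ g : ℕ → ℕ, ∃ a, ∀ᶠ n in atTop, g n ≤ f a n) :
    IsDaggerLambdaPrime {x | ∃ a, ∀ n, x n = true ↔ n ∈ range (f a)} := by
  classical
  intro g
  obtain ⟨a₀, ha₀⟩ := hdom g
  apply isLambdaPrime_of_mk_lt_bNumber
  have hsub : {x | ∃ a, ∀ n, x n = true ↔ n ∈ range (f a)} ∩ Gg g ⊆
      (fun a n => decide (n ∈ range (f a))) '' Iic a₀ := by
    rintro x ⟨⟨a, hx⟩, -, hfreq⟩
    refine ⟨a, not_lt.1 fun ha => ?_, funext fun n =>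
      Bool.eq_iff_iff.2 (decide_eq_true_iff.trans (hx n).symm)⟩
    rw [nth_eq_of_forall_iff_mem_range (hmono a) hx] at hfreq
    obtain ⟨n, h1, h2, h3⟩ := (hfreq.and_eventually (ha₀.and (hlt a₀ a ha))).exists
    omega
  exact (mk_le_mk_of_subset hsub).trans_lt (mk_image_le.trans_lt (hι a₀))

theorem b_eq_d_gives_dagger_lambda_prime_not_lambda_prime
    (hbd : bNumber = dNumber) :
    ∃ f : (Cardinal.ord bNumber).ToType → (ℕ → ℕ),
      (∀ a, StrictMono (f a)) ∧
      (∀ a b, a < b → ∀ᶠ n in atTop, f a n < f b n) ∧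
      (∀ g : ℕ → ℕ, ∃ a, ∀ᶠ n in atTop, g n ≤ f a n) ∧
      ∀ X : Set (ℕ → Bool),
        X = {x | ∃ a, ∀ n, x n = true ↔ n ∈ Set.range (f a)} →
        IsDaggerLambdaPrime X ∧ ¬ IsLambdaPrime X := by
  classical
  obtain ⟨e, he⟩ := exists_dominating_of_mk_eq_dNumber (ι := (Cardinal.ord bNumber).ToType)
    (by simpa using hbd)
  obtain ⟨f, hmono, hlt, hdom⟩ := exists_scale (fun a => by simpa using mk_Iio_lt a) he
  refine ⟨f, hmono, hlt, hdom, ?_⟩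
  rintro X rfl
  refine ⟨isDaggerLambdaPrime_of_scale mk_Iic_lt_bNumber hmono hlt hdom,
    not_isLambdaPrime_of_dominating ?_ fun g => ?_⟩
  · rintro x ⟨a, hx⟩
    exact infinite_of_forall_iff_mem_range (hmono a).injective hx
  · obtain ⟨a, ha⟩ := hdom g
    refine ⟨_, ⟨a, fun n => decide_eq_true_iff⟩, ?_⟩
    rwa [nth_eq_of_forall_iff_mem_range (hmono a) fun n => decide_eq_true_iff]
end
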